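/- Every L∞-viscosity subsolution of min{Δ∞u, |Du| − χ_D} = 0 in Ω is a viscosity subsolution of the same equation, and every L∞-viscosity supersolution is a viscosity supersolution; in particular, every L∞-viscosity solution is a viscosity solution. -/

import Mathlib

open Metric Set Filter MeasureTheory
open scoped Topology RealInnerProductSpace NNReal

noncomputable section

variable {n : ℕ}

local notation "E" => EuclideanSpace ℝ (Fin n)

/-- The infinity Laplacian Δ∞φ(x) = ⟨D²φ(x) Dφ(x), Dφ(x)⟩. -/
def infLap (φ : E → ℝ) (x : E) : ℝ :=
  inner ℝ ((fderiv ℝ (gradient φ) x) (gradient φ x)) (gradient φ x)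

/-- The Laplacian Δφ(x), as the trace of the Hessian. -/
def lap (φ : E → ℝ) (x : E) : ℝ :=
  LinearMap.trace ℝ E (fderiv ℝ (gradient φ) x).toLinearMap

/-- Δ_pφ(x) = |Dφ(x)|^{p−4} ((p−2) Δ∞φ(x) + |Dφ(x)|² Δφ(x)). -/
def pLap (p : ℝ) (φ : E → ℝ) (x : E) : ℝ :=
  ‖gradient φ x‖ ^ (p - 4) * ((p - 2) * infLap φ x + ‖gradient φ x‖ ^ 2 * lap φ x)

/-- g − φ has a strict local maximum at x relative to s. -/
def IsStrictLocalMaxOn (g : E → ℝ) (s : Set E) (x : E) : Prop :=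
  ∃ r > 0, ∀ y ∈ ball x r ∩ s, y ≠ x → g y < g x

def IsStrictLocalMinOn (g : E → ℝ) (s : Set E) (x : E) : Prop :=
  ∃ r > 0, ∀ y ∈ ball x r ∩ s, y ≠ x → g x < g y

/-- characteristic function of a set -/
def chi (S : Set E) (x : E) : ℝ := S.indicator (fun _ => (1:ℝ)) x

/-- viscosity subsolution of min{Δ∞u, |Du| − χ_D} = 0 in Ω -/
def IsGCsub (Ω D : Set E) (u : E → ℝ) : Prop :=
  ∀ x ∈ Ω, ∀ φ : E → ℝ, ContDiffOn ℝ 2 φ Ω →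
    IsStrictLocalMaxOn (fun y => u y - φ y) Ω x →
    0 ≤ infLap φ x ∧ chi (interior D) x ≤ ‖gradient φ x‖

/-- viscosity supersolution of min{Δ∞u, |Du| − χ_D} = 0 in Ω -/
def IsGCsuper (Ω D : Set E) (u : E → ℝ) : Prop :=
  ∀ x ∈ Ω, ∀ φ : E → ℝ, ContDiffOn ℝ 2 φ Ω →
    IsStrictLocalMinOn (fun y => u y - φ y) Ω x →
    infLap φ x ≤ 0 ∨ ‖gradient φ x‖ ≤ chi (closure D) x

/-- solution of the gradient constraint problem (GC) for the data (Ω, D, f) -/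
def IsGCsol (Ω D : Set E) (f u : E → ℝ) : Prop :=
  ContinuousOn u (closure Ω) ∧ IsGCsub Ω D u ∧ IsGCsuper Ω D u ∧
    ∀ x ∈ frontier Ω, u x = f x

/-- viscosity solution of Jensen's equation min{Δ∞u, |Du| − 1} = 0 in Ω -/
def IsJensenSol (Ω : Set E) (u : E → ℝ) : Prop :=
  (∀ x ∈ Ω, ∀ φ : E → ℝ, ContDiffOn ℝ 2 φ Ω →
    IsStrictLocalMaxOn (fun y => u y - φ y) Ω x →
    0 ≤ infLap φ x ∧ 1 ≤ ‖gradient φ x‖) ∧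
  (∀ x ∈ Ω, ∀ φ : E → ℝ, ContDiffOn ℝ 2 φ Ω →
    IsStrictLocalMinOn (fun y => u y - φ y) Ω x →
    infLap φ x ≤ 0 ∨ ‖gradient φ x‖ ≤ 1)

/-- viscosity solution of Δ∞u = 0 in the open set V -/
def IsInfHarmonic (V : Set E) (u : E → ℝ) : Prop :=
  (∀ x ∈ V, ∀ φ : E → ℝ, ContDiffOn ℝ 2 φ V →
    IsStrictLocalMaxOn (fun y => u y - φ y) V x → 0 ≤ infLap φ x) ∧
  (∀ x ∈ V, ∀ φ : E → ℝ, ContDiffOn ℝ 2 φ V →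
    IsStrictLocalMinOn (fun y => u y - φ y) V x → infLap φ x ≤ 0)

/-- viscosity solution of Δ_p u = g in Ω -/
def IsPViscSol (Ω : Set E) (p : ℝ) (g : E → ℝ) (u : E → ℝ) : Prop :=
  ContinuousOn u Ω ∧
  (∀ x ∈ Ω, ∀ φ : E → ℝ, ContDiffOn ℝ 2 φ Ω →
    IsStrictLocalMaxOn (fun y => u y - φ y) Ω x →
    Filter.liminf g (𝓝[Ω] x) ≤ pLap p φ x) ∧
  (∀ x ∈ Ω, ∀ φ : E → ℝ, ContDiffOn ℝ 2 φ Ω →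
    IsStrictLocalMinOn (fun y => u y - φ y) Ω x →
    pLap p φ x ≤ Filter.limsup g (𝓝[Ω] x))

/-- the boundary strip Γ_ε -/
def GammaStrip (Ω : Set E) (ε : ℝ) : Set E :=
  {x | x ∉ Ω ∧ Metric.infDist x (frontier Ω) < ε}

/-- dynamic programming principle for the D-game -/
def SatisfiesDPP_D (Ω D : Set E) (ε : ℝ) (u : E → ℝ) : Prop :=
  ∀ x ∈ Ω, u x = min ((sSup (u '' closedBall x ε) + sInf (u '' closedBall x ε)) / 2)
      (sSup (u '' closedBall x ε) - ε * chi D x)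

/-- dynamic programming principle for the Ω-game -/
def SatisfiesDPP_Om (Ω : Set E) (ε : ℝ) (u : E → ℝ) : Prop :=
  ∀ x ∈ Ω, u x = min ((sSup (u '' closedBall x ε) + sInf (u '' closedBall x ε)) / 2)
      (sSup (u '' closedBall x ε) - ε)

/-- φ ∈ W^{2,∞}_loc(Ω): differentiable with locally Lipschitz gradient on Ω -/
def W2InfLoc (Ω : Set E) (φ : E → ℝ) : Prop :=
  (∀ x ∈ Ω, DifferentiableAt ℝ φ x) ∧
  ∀ x ∈ Ω, ∃ K : ℝ≥0, ∃ s ∈ 𝓝[Ω] x, LipschitzOnWith K (gradient φ) s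

/-- ess limsup_{y→x} F(y) -/
def essLimsupAt (F : E → ℝ) (x : E) : ℝ :=
  ⨅ r ∈ Set.Ioi (0:ℝ), essSup F (volume.restrict (ball x r))

/-- ess liminf_{y→x} F(y) -/
def essLiminfAt (F : E → ℝ) (x : E) : ℝ :=
  ⨆ r ∈ Set.Ioi (0:ℝ), essInf F (volume.restrict (ball x r))

/-- L∞-viscosity subsolution of min{Δ∞u, |Du| − χ_D} = 0 in Ω -/
def IsLinfGCsub (Ω D : Set E) (u : E → ℝ) : Prop :=
  ∀ x ∈ Ω, ∀ φ : E → ℝ, W2InfLoc Ω φ →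
    IsStrictLocalMaxOn (fun y => u y - φ y) Ω x →
    0 ≤ essLimsupAt (fun y => min (infLap φ y) (‖gradient φ y‖ - chi D y)) x

/-- L∞-viscosity supersolution of min{Δ∞u, |Du| − χ_D} = 0 in Ω -/
def IsLinfGCsuper (Ω D : Set E) (u : E → ℝ) : Prop :=
  ∀ x ∈ Ω, ∀ φ : E → ℝ, W2InfLoc Ω φ →
    IsStrictLocalMinOn (fun y => u y - φ y) Ω x →
    essLiminfAt (fun y => min (infLap φ y) (‖gradient φ y‖ - chi D y)) x ≤ 0

/-- L∞-viscosity solution of Δ_p u = χ_D in Ω -/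
def IsLinfPSol (Ω D : Set E) (p : ℝ) (u : E → ℝ) : Prop :=
  ContinuousOn u Ω ∧
  (∀ x ∈ Ω, ∀ φ : E → ℝ, W2InfLoc Ω φ →
    IsStrictLocalMaxOn (fun y => u y - φ y) Ω x →
    0 ≤ essLimsupAt (fun y => pLap p φ y - chi D y) x) ∧
  (∀ x ∈ Ω, ∀ φ : E → ℝ, W2InfLoc Ω φ →
    IsStrictLocalMinOn (fun y => u y - φ y) Ω x →
    essLiminfAt (fun y => pLap p φ y - chi D y) x ≤ 0)


/-!
A `C²` test function is an admissible `W^{2,∞}_loc` test function, and `Δ∞φ`, `|Dφ|` are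
continuous. The only discontinuous ingredient of `min {Δ∞φ, |Dφ| - χ_D}` is `χ_D`, which near `x`
lies between the constants `χ_{int D}(x)` and `χ_{cl D}(x)`. So the essential limsup (liminf) of
the operator at `x` is at most (at least) its value at `x` with `χ_D` frozen at `χ_{int D}(x)`
(resp. `χ_{cl D}(x)`), which turns the `L∞`-viscosity inequality into the pointwise one.
-/

lemma chi_le_one (S : Set E) (x : E) : chi S x ≤ 1 :=
  Set.indicator_le_self' (fun _ _ => zero_le_one) x

lemma eventually_chi_interior_le_chi (S : Set E) (x : E) :
    ∀ᶠ y in 𝓝 x, chi (interior S) x ≤ chi S y := by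
  by_cases hx : x ∈ interior S
  · filter_upwards [isOpen_interior.mem_nhds hx] with y hy
    simp [chi, hx, interior_subset hy]
  · exact .of_forall fun y => by
      simpa [chi, hx] using Set.indicator_nonneg (fun _ _ => zero_le_one) y

lemma eventually_chi_le_chi_closure (S : Set E) (x : E) :
    ∀ᶠ y in 𝓝 x, chi S y ≤ chi (closure S) x := by
  by_cases hx : x ∈ closure S
  · simpa [chi, hx] using .of_forall (chi_le_one S)
  · filter_upwards [isClosed_closure.isOpen_compl.mem_nhds hx] with y hy
    simp [chi, hx, Set.indicator_of_notMem fun hyS => hy (subset_closure hyS)]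

lemma ae_restrict_ball_neBot (x : E) {r : ℝ} (hr : 0 < r) :
    (ae (volume.restrict (ball x r))).NeBot := by
  rw [ae_neBot, Ne, Measure.restrict_eq_zero]
  exact (measure_ball_pos volume x hr).ne'

lemma ae_restrict_ball_mono {x : E} {r r' : ℝ} (h : r ≤ r') :
    ae (volume.restrict (ball x r)) ≤ ae (volume.restrict (ball x r')) :=
  ae_mono (Measure.restrict_mono (ball_subset_ball h) le_rfl)

lemma essSup_restrict_ball_le {F : E → ℝ} {x : E} {r b c : ℝ} (hr : 0 < r)
    (hb : ∀ y ∈ ball x r, b ≤ F y) (hc : ∀ y ∈ ball x r, F y ≤ c) :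
    essSup F (volume.restrict (ball x r)) ≤ c :=
  have := ae_restrict_ball_neBot x hr
  essSup_le_of_ae_le c ((ae_restrict_mem measurableSet_ball).mono hc)
    (isCoboundedUnder_le_of_eventually_le _ ((ae_restrict_mem measurableSet_ball).mono hb))

lemma le_essInf_restrict_ball {F : E → ℝ} {x : E} {r b c : ℝ} (hr : 0 < r)
    (hb : ∀ y ∈ ball x r, b ≤ F y) (hc : ∀ y ∈ ball x r, F y ≤ c) :
    b ≤ essInf F (volume.restrict (ball x r)) :=
  have := ae_restrict_ball_neBot x hr
  le_essInf_of_ae_le b ((ae_restrict_mem measurableSet_ball).mono hb)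
    (isCoboundedUnder_ge_of_eventually_le _ ((ae_restrict_mem measurableSet_ball).mono hc))

/-- The `min b 0` accounts for the junk value `0` of `essSup` when `F` is not essentially
bounded above on the ball. -/
lemma min_le_essSup_restrict_ball {F : E → ℝ} {x : E} {r r₀ b : ℝ} (hr : 0 < r)
    (hr₀ : 0 < r₀) (hb : ∀ y ∈ ball x r₀, b ≤ F y) :
    min b 0 ≤ essSup F (volume.restrict (ball x r)) := by
  by_cases hF : IsBoundedUnder (· ≤ ·) (ae (volume.restrict (ball x r))) F
  · have := ae_restrict_ball_neBot x (lt_min hr hr₀)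
    have hfreq : ∃ᶠ y in ae (volume.restrict (ball x r)), b ≤ F y :=
      ((ae_restrict_mem measurableSet_ball).mono fun y hy =>
        hb y (ball_subset_ball (min_le_right _ _) hy)).frequently.filter_mono
        (ae_restrict_ball_mono (min_le_left _ _))
    exact (min_le_left _ _).trans (le_limsup_of_frequently_le hfreq hF)
  · rw [essSup, Real.limsup_of_not_isBoundedUnder hF]
    exact min_le_right _ _

lemma essInf_restrict_ball_le_max {F : E → ℝ} {x : E} {r r₀ c : ℝ} (hr : 0 < r)
    (hr₀ : 0 < r₀) (hc : ∀ y ∈ ball x r₀, F y ≤ c) :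
    essInf F (volume.restrict (ball x r)) ≤ max c 0 := by
  by_cases hF : IsBoundedUnder (· ≥ ·) (ae (volume.restrict (ball x r))) F
  · have := ae_restrict_ball_neBot x (lt_min hr hr₀)
    have hfreq : ∃ᶠ y in ae (volume.restrict (ball x r)), F y ≤ c :=
      ((ae_restrict_mem measurableSet_ball).mono fun y hy =>
        hc y (ball_subset_ball (min_le_right _ _) hy)).frequently.filter_mono
        (ae_restrict_ball_mono (min_le_left _ _))
    exact (liminf_le_of_frequently_le hfreq hF).trans (le_max_left _ _)
  · rw [essInf, Real.liminf_of_not_isBoundedUnder hF]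
    exact le_max_right _ _

lemma essLimsupAt_le_essSup_restrict_ball {F : E → ℝ} {x : E} {r₀ b : ℝ} (hr₀ : 0 < r₀)
    (hb : ∀ y ∈ ball x r₀, b ≤ F y) :
    essLimsupAt F x ≤ essSup F (volume.restrict (ball x r₀)) := by
  have hbdd : BddBelow (range fun r : ℝ =>
      ⨅ _ : r ∈ Ioi (0 : ℝ), essSup F (volume.restrict (ball x r))) := by
    refine ⟨min b 0, forall_mem_range.2 fun r => ?_⟩
    by_cases hr : r ∈ Ioi (0 : ℝ)
    · simpa only [ciInf_pos hr] using min_le_essSup_restrict_ball hr hr₀ hb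
    · simp [hr]
  exact (ciInf_le hbdd r₀).trans_eq (ciInf_pos hr₀)

lemma essInf_restrict_ball_le_essLiminfAt {F : E → ℝ} {x : E} {r₀ c : ℝ} (hr₀ : 0 < r₀)
    (hc : ∀ y ∈ ball x r₀, F y ≤ c) :
    essInf F (volume.restrict (ball x r₀)) ≤ essLiminfAt F x := by
  have hbdd : BddAbove (range fun r : ℝ =>
      ⨆ _ : r ∈ Ioi (0 : ℝ), essInf F (volume.restrict (ball x r))) := by
    refine ⟨max c 0, forall_mem_range.2 fun r => ?_⟩
    by_cases hr : r ∈ Ioi (0 : ℝ)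
    · simpa only [ciSup_pos hr] using essInf_restrict_ball_le_max hr hr₀ hc
    · simp [hr]
  exact (ciSup_pos hr₀).symm.trans_le (le_ciSup hbdd r₀)

lemma essLimsupAt_le {F : E → ℝ} {x : E} {c : ℝ} (hF : IsBoundedUnder (· ≥ ·) (𝓝 x) F)
    (hc : ∀ᶠ y in 𝓝 x, F y ≤ c) : essLimsupAt F x ≤ c := by
  obtain ⟨b, hb⟩ := hF
  obtain ⟨r, hr, hbc⟩ := eventually_nhds_iff_ball.1 ((eventually_map.1 hb).and hc)
  exact (essLimsupAt_le_essSup_restrict_ball hr fun y hy => (hbc y hy).1).trans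
    (essSup_restrict_ball_le hr (fun y hy => (hbc y hy).1) fun y hy => (hbc y hy).2)

lemma le_essLiminfAt {F : E → ℝ} {x : E} {b : ℝ} (hF : IsBoundedUnder (· ≤ ·) (𝓝 x) F)
    (hb : ∀ᶠ y in 𝓝 x, b ≤ F y) : b ≤ essLiminfAt F x := by
  obtain ⟨c, hc⟩ := hF
  obtain ⟨r, hr, hbc⟩ := eventually_nhds_iff_ball.1 (hb.and (eventually_map.1 hc))
  exact (le_essInf_restrict_ball hr (fun y hy => (hbc y hy).1) fun y hy => (hbc y hy).2).trans
    (essInf_restrict_ball_le_essLiminfAt hr fun y hy => (hbc y hy).2)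

lemma essLimsupAt_le_of_eventually_le {F G : E → ℝ} {x : E}
    (hF : IsBoundedUnder (· ≥ ·) (𝓝 x) F)
    (hG : ContinuousAt G x) (hFG : F ≤ᶠ[𝓝 x] G) : essLimsupAt F x ≤ G x :=
  le_of_forall_gt_imp_ge_of_dense fun _ hc => essLimsupAt_le hF <| by
    filter_upwards [hFG, hG.eventually_lt_const hc] with y h₁ h₂ using h₁.trans h₂.le

lemma le_essLiminfAt_of_eventually_le {F G : E → ℝ} {x : E}
    (hF : IsBoundedUnder (· ≤ ·) (𝓝 x) F)
    (hG : ContinuousAt G x) (hGF : G ≤ᶠ[𝓝 x] F) : G x ≤ essLiminfAt F x :=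
  le_of_forall_lt_imp_le_of_dense fun _ hc => le_essLiminfAt hF <| by
    filter_upwards [hGF, hG.eventually_const_lt hc] with y h₁ h₂ using h₂.le.trans h₁

lemma ContDiffAt.contDiffAt_gradient {F : Type*} [NormedAddCommGroup F] [InnerProductSpace ℝ F]
    [CompleteSpace F] {f : F → ℝ} {y : F} {k : WithTop ℕ∞} (hf : ContDiffAt ℝ (k + 1) f y) :
    ContDiffAt ℝ k (gradient f) y :=
  (InnerProductSpace.toDual ℝ F).symm.contDiff.comp_contDiffAt y (hf.fderiv_right le_rfl)

lemma W2InfLoc.of_contDiffOn {Ω : Set E} {φ : E → ℝ} (hΩ : IsOpen Ω) (hφ : ContDiffOn ℝ 2 φ Ω) :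
    W2InfLoc Ω φ := by
  refine ⟨fun x hx => (hφ.contDiffAt (hΩ.mem_nhds hx)).differentiableAt two_ne_zero,
    fun x hx => ?_⟩
  have hgrad : ContDiffAt ℝ 1 (gradient φ) x :=
    ContDiffAt.contDiffAt_gradient (k := 1) (hφ.contDiffAt (hΩ.mem_nhds hx))
  obtain ⟨K, t, ht, hK⟩ := hgrad.exists_lipschitzOnWith
  exact ⟨K, t, mem_nhdsWithin_of_mem_nhds ht, hK⟩

lemma ContDiffAt.continuousAt_infLap {φ : E → ℝ} {x : E} (hφ : ContDiffAt ℝ 2 φ x) :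
    ContinuousAt (infLap φ) x := by
  have hgrad : ContDiffAt ℝ 1 (gradient φ) x := ContDiffAt.contDiffAt_gradient (k := 1) hφ
  exact ((hgrad.continuousAt_fderiv one_ne_zero).clm_apply hgrad.continuousAt).inner
    hgrad.continuousAt

lemma ContDiffAt.continuousAt_norm_gradient {φ : E → ℝ} {x : E} (hφ : ContDiffAt ℝ 2 φ x) :
    ContinuousAt (fun y => ‖gradient φ y‖) x :=
  (ContDiffAt.contDiffAt_gradient (k := 1) hφ).continuousAt.norm

theorem IsLinfGCsub.isGCsub {Ω D : Set E} {u : E → ℝ} (hΩ : IsOpen Ω)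
    (h : IsLinfGCsub Ω D u) : IsGCsub Ω D u := by
  intro x hx φ hφ hmax
  have hφx : ContDiffAt ℝ 2 φ x := hφ.contDiffAt (hΩ.mem_nhds hx)
  have hG (c : ℝ) : ContinuousAt (fun y => min (infLap φ y) (‖gradient φ y‖ - c)) x :=
    hφx.continuousAt_infLap.min (hφx.continuousAt_norm_gradient.sub continuousAt_const)
  have hbdd : IsBoundedUnder (· ≥ ·) (𝓝 x)
      fun y => min (infLap φ y) (‖gradient φ y‖ - chi D y) :=
    (hG 1).tendsto.isBoundedUnder_ge.mono_ge <|
      .of_forall fun y => min_le_min_left _ (by linarith [chi_le_one D y])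
  have key := (h x hx φ (W2InfLoc.of_contDiffOn hΩ hφ) hmax).trans <|
    essLimsupAt_le_of_eventually_le hbdd (hG (chi (interior D) x)) <| by
      filter_upwards [eventually_chi_interior_le_chi D x] with y hy
      exact min_le_min_left _ (by linarith)
  rw [le_min_iff, sub_nonneg] at key
  exact key

theorem IsLinfGCsuper.isGCsuper {Ω D : Set E} {u : E → ℝ} (hΩ : IsOpen Ω)
    (h : IsLinfGCsuper Ω D u) : IsGCsuper Ω D u := by
  intro x hx φ hφ hmin
  have hφx : ContDiffAt ℝ 2 φ x := hφ.contDiffAt (hΩ.mem_nhds hx)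
  have hG : ContinuousAt
      (fun y => min (infLap φ y) (‖gradient φ y‖ - chi (closure D) x)) x :=
    hφx.continuousAt_infLap.min (hφx.continuousAt_norm_gradient.sub continuousAt_const)
  have hbdd : IsBoundedUnder (· ≤ ·) (𝓝 x)
      fun y => min (infLap φ y) (‖gradient φ y‖ - chi D y) :=
    hφx.continuousAt_infLap.tendsto.isBoundedUnder_le.mono_le <|
      .of_forall fun _ => min_le_left _ _
  have key := (le_essLiminfAt_of_eventually_le hbdd hG <| by
      filter_upwards [eventually_chi_le_chi_closure D x] with y hy
      exact min_le_min_left _ (by linarith)).trans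
    (h x hx φ (W2InfLoc.of_contDiffOn hΩ hφ) hmin)
  rw [min_le_iff, sub_nonpos] at key
  exact key

theorem stmt_14_general (Ω D : Set E) (hΩo : IsOpen Ω)
    (u : E → ℝ) :
    (IsLinfGCsub Ω D u → IsGCsub Ω D u) ∧
      (IsLinfGCsuper Ω D u → IsGCsuper Ω D u) ∧
      (IsLinfGCsub Ω D u ∧ IsLinfGCsuper Ω D u → IsGCsub Ω D u ∧ IsGCsuper Ω D u) :=
  ⟨IsLinfGCsub.isGCsub hΩo, IsLinfGCsuper.isGCsuper hΩo,
    fun h => ⟨h.1.isGCsub hΩo, h.2.isGCsuper hΩo⟩⟩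

/-- L∞-viscosity sub/supersolutions are viscosity sub/supersolutions. -/
theorem stmt_14 (hn : 1 ≤ n) (Ω D : Set E) (hΩo : IsOpen Ω) (hΩne : Ω.Nonempty)
    (hΩb : Bornology.IsBounded Ω) (hD : D ⊆ Ω)
    (u : E → ℝ) (hu : ContinuousOn u Ω) :
    (IsLinfGCsub Ω D u → IsGCsub Ω D u) ∧
      (IsLinfGCsuper Ω D u → IsGCsuper Ω D u) ∧
      (IsLinfGCsub Ω D u ∧ IsLinfGCsuper Ω D u → IsGCsub Ω D u ∧ IsGCsuper Ω D u) :=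
  stmt_14_general Ω D hΩo u

end
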